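/- arXiv:2006.12868 — 4 statements merged into one kernel-verified Lean document; each statement's English description precedes it below -/
import Mathlib

section
/- Sequences over a searchable type are searchable for uniformly continuous predicates: if X has a searcher, then for every n : ℕ and every predicate Q : (ℕ → X) → Bool such that (∀ α β, (∀ i < n, α i = β i) → Q α = Q β), there exists a sequence α₀ : ℕ → X with the property that if any sequence satisfies Q then Q α₀ = true. -/
theorem tychonoff_sequences {X : Type*}
    (E : (X → Bool) → X)
    (hE : ∀ Q : X → Bool, (∃ x, Q x = true) → Q (E Q) = true)
    (n : ℕ) (Q : (ℕ → X) → Bool)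
    (hQ : ∀ α β : ℕ → X, (∀ i < n, α i = β i) → Q α = Q β) :
    ∃ α₀ : ℕ → X, (∃ α, Q α = true) → Q α₀ = true := by
  induction n generalizing Q with
  | zero =>
    refine ⟨fun _ => E (fun _ => true), ?_⟩
    rintro ⟨α, hα⟩
    rw [hQ _ α (fun i hi => absurd hi (Nat.not_lt_zero i))]
    exact hα
  | succ n ih =>
    set cons : X → (ℕ → X) → (ℕ → X) :=
      fun x β i => match i with | 0 => x | k+1 => β k with hcons
    have key : ∀ x : X, ∃ β₀ : ℕ → X,
        (∃ β, Q (cons x β) = true) → Q (cons x β₀) = true := by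
      intro x
      apply ih (fun β => Q (cons x β))
      intro α β h
      apply hQ
      intro i hi
      match i with
      | 0 => rfl
      | k+1 => exact h k (Nat.lt_of_succ_lt_succ hi)
    choose F hF using key
    set p : X → Bool := fun x => Q (cons x (F x)) with hp
    refine ⟨cons (E p) (F (E p)), ?_⟩
    rintro ⟨α, hα⟩
    have hαeq : Q (cons (α 0) (fun k => α (k+1))) = true := by
      rw [hQ _ α]
      · exact hα
      · intro i hi; match i with | 0 => rfl | k+1 => rfl
    have h1 : p (E p) = true := hE p ⟨α 0, hF (α 0) ⟨_, hαeq⟩⟩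
    exact h1
end

section
/- Argmin is closed under products: if types X and Y admit argmin with respect to the preorder ≤_p for every function into binary sequences (possibly restricted to uniformly continuous ones), then so does X × Y; concretely, setting ŷ(x) = argmin of (fun y => f (x,y)), x₀ = argmin of (fun x => f (x, ŷ x)), y₀ = ŷ x₀, one has f (x₀, y₀) ≤_p f (x, y) for all x, y. -/
def ltPrec (p : ℕ) (a b : ℕ → Bool) : Prop :=
  ∃ k < p, (∀ i < k, a i = b i) ∧ a k < b k

def lePrec (p : ℕ) (a b : ℕ → Bool) : Prop :=
  ltPrec p a b ∨ ∀ i < p, a i = b i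

lemma lePrec_trans {p : ℕ} {a b c : ℕ → Bool} (h1 : lePrec p a b) (h2 : lePrec p b c) :
    lePrec p a c := by
  rcases h1 with ⟨k, hk, hag, hlt⟩ | heq1
  · rcases h2 with ⟨m, hm, hbg, hlt2⟩ | heq2
    · rcases lt_trichotomy k m with h | h | h
      · exact Or.inl ⟨k, hk, fun i hi => (hag i hi).trans (hbg i (hi.trans h)),
          by rw [hbg k h] at hlt; exact hlt⟩
      · subst h
        exact Or.inl ⟨k, hk, fun i hi => (hag i hi).trans (hbg i hi), hlt.trans hlt2⟩
      · exact Or.inl ⟨m, hm, fun i hi => (hag i (hi.trans h)).trans (hbg i hi),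
          by rw [hag m h]; exact hlt2⟩
    · exact Or.inl ⟨k, hk, fun i hi => (hag i hi).trans (heq2 i (hi.trans hk)),
        by rw [← heq2 k hk]; exact hlt⟩
  · rcases h2 with ⟨m, hm, hbg, hlt2⟩ | heq2
    · exact Or.inl ⟨m, hm, fun i hi => (heq1 i (hi.trans hm)).trans (hbg i hi),
        by rw [heq1 m hm]; exact hlt2⟩
    · exact Or.inr fun i hi => (heq1 i hi).trans (heq2 i hi)

theorem argmin_product {X Y : Type*} (p : ℕ)
    (AX : (X → (ℕ → Bool)) → X)
    (hAX : ∀ g : X → (ℕ → Bool), ∀ x : X, lePrec p (g (AX g)) (g x))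
    (AY : (Y → (ℕ → Bool)) → Y)
    (hAY : ∀ g : Y → (ℕ → Bool), ∀ y : Y, lePrec p (g (AY g)) (g y))
    (f : X × Y → (ℕ → Bool)) :
    ∀ x y,
      lePrec p
        (f (AX (fun x => f (x, AY (fun y => f (x, y)))),
            AY (fun y => f (AX (fun x => f (x, AY (fun y => f (x, y)))), y))))
        (f (x, y)) := by
  intro x y
  exact lePrec_trans (hAX (fun x => f (x, AY (fun y => f (x, y)))) x)
    (hAY (fun y => f (x, y)) y)
end

section
/- The signed-digit midpoint operator is uniformly continuous: for all n : ℕ, all signed-digit sequences x, y, x', y' : ℕ → {-1,0,1}, and all carries i : ℤ, if x and x' agree on the first n+1 digits and y and y' agree on the first n+1 digits, then the auxiliary midpoint ⊞(x, y, i) and ⊞(x', y', i) agree on the first n+1 digits — hence x ⊕ y and x' ⊕ y' agree on the first n digits whenever the inputs agree on the first n+1 digits. -/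
def digitOut (m : ℤ) : ℤ := if m ≤ -2 then -1 else if m ≤ 1 then 0 else 1

def carryOut (m : ℤ) : ℤ := if m ≤ -2 then m + 4 else if m ≤ 1 then m else m - 4

/-- Auxiliary midpoint `⊞(x, y, i)` on signed-digit sequences with carry `i`. -/
def boxplus (x y : ℕ → ℤ) (i : ℤ) : ℕ → ℤ
  | 0 => digitOut (2 * i + x 0 + y 0)
  | n + 1 => boxplus (fun m => x (m + 1)) (fun m => y (m + 1))
      (carryOut (2 * i + x 0 + y 0)) n

/-- Midpoint `x ⊕ y` of signed-digit sequences. -/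
def mid (x y : ℕ → ℤ) : ℕ → ℤ :=
  boxplus (fun m => x (m + 1)) (fun m => y (m + 1)) (x 0 + y 0)


lemma boxplus_congr : ∀ (j : ℕ) (x y x' y' : ℕ → ℤ) (i : ℤ),
    (∀ k ≤ j, x k = x' k) → (∀ k ≤ j, y k = y' k) →
    boxplus x y i j = boxplus x' y' i j := by
  intro j
  induction j with
  | zero =>
    intro x y x' y' i hx hy
    simp [boxplus, hx 0 le_rfl, hy 0 le_rfl]
  | succ j ih =>
    intro x y x' y' i hx hy
    simp only [boxplus, hx 0 (Nat.zero_le _), hy 0 (Nat.zero_le _)]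
    exact ih _ _ _ _ _ (fun k hk => hx (k+1) (by omega)) (fun k hk => hy (k+1) (by omega))

theorem midpoint_uniformly_continuous (n : ℕ) (x y x' y' : ℕ → ℤ)
    (hx : ∀ j, x j = -1 ∨ x j = 0 ∨ x j = 1)
    (hy : ∀ j, y j = -1 ∨ y j = 0 ∨ y j = 1)
    (hx' : ∀ j, x' j = -1 ∨ x' j = 0 ∨ x' j = 1)
    (hy' : ∀ j, y' j = -1 ∨ y' j = 0 ∨ y' j = 1)
    (i : ℤ)
    (hxx : ∀ j < n + 1, x j = x' j) (hyy : ∀ j < n + 1, y j = y' j) :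
    (∀ j < n + 1, boxplus x y i j = boxplus x' y' i j) ∧
    (∀ j < n, mid x y j = mid x' y' j) := by
  constructor
  · intro j hj
    exact boxplus_congr j x y x' y' i (fun k hk => hxx k (by omega)) (fun k hk => hyy k (by omega))
  · intro j hj
    unfold mid
    rw [hxx 0 (by omega), hyy 0 (by omega)]
    exact boxplus_congr j _ _ _ _ _ (fun k hk => hxx (k+1) (by omega)) (fun k hk => hyy (k+1) (by omega))
end

section
/- Given searchability of a parameter type S for uniformly continuous decidable predicates, the imperfect-model regression theorem holds: let Φ be a continuous loss function on an oracle type Y with values in binary sequences, p a precision, ε a binary sequence. Then there exists a regressor reg such that for every k₀ : S, weakly continuous model M : S → Y, and distortion Ψ : Y → Y, setting Ω = M k₀, Ψ_Ω = Ψ Ω, and k = reg M Ψ_Ω: if Φ(Ψ_Ω, Ω) <_p ε then Φ(Ψ_Ω, M k) <_p ε. -/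
/-- Equality with precision `p` on binary sequences. -/
def eqPrec (p : ℕ) (a b : ℕ → Bool) : Prop := ∀ i < p, a i = b i

/-- The oracle type: functions between binary-sequence spaces. -/
abbrev Orc : Type := (ℕ → Bool) → (ℕ → Bool)

/-- Pointwise agreement with precision `q` of two oracles. -/
def approx (q : ℕ) (g h : Orc) : Prop := ∀ x, eqPrec q (g x) (h x)

instance (p : ℕ) (a b : ℕ → Bool) : Decidable (ltPrec p a b) := by
  unfold ltPrec; infer_instance

lemma ltPrec_congr {p : ℕ} {a a' b : ℕ → Bool} (h : eqPrec p a a') :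
    ltPrec p a b ↔ ltPrec p a' b := by
  constructor <;> rintro ⟨k, hk, h1, h2⟩ <;> refine ⟨k, hk, fun i hi => ?_, ?_⟩
  · rw [← h i (hi.trans hk), h1 i hi]
  · rw [← h k hk]; exact h2
  · rw [h i (hi.trans hk), h1 i hi]
  · rw [h k hk]; exact h2

theorem imperfect_model_regression
    {S : Type*} (eqS : ℕ → S → S → Prop)
    (E : (S → Bool) → S)
    (hE : ∀ Q : S → Bool,
      (∃ q, ∀ k k' : S, eqS q k k' → Q k = Q k') →
      (∃ s, Q s = true) → Q (E Q) = true)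
    (Φ : Orc → Orc → (ℕ → Bool))
    (hΦ : ∀ p : ℕ, ∃ q : ℕ, ∀ f g h : Orc,
      approx q g h → eqPrec p (Φ f g) (Φ f h))
    (p : ℕ) (ε : ℕ → Bool) :
    ∃ reg : (S → Orc) → Orc → S,
      ∀ (k₀ : S) (M : S → Orc),
        (∀ p' : ℕ, ∃ q : ℕ, ∀ k k' : S, eqS q k k' → approx p' (M k) (M k')) →
        ∀ Ψ : Orc → Orc,
          ltPrec p (Φ (Ψ (M k₀)) (M k₀)) ε →
          ltPrec p (Φ (Ψ (M k₀)) (M (reg M (Ψ (M k₀))))) ε := by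
  refine ⟨fun M Ω' => E (fun k => decide (ltPrec p (Φ Ω' (M k)) ε)), ?_⟩
  intro k₀ M hM Ψ hlt
  set Ω' := Ψ (M k₀)
  set Q : S → Bool := fun k => decide (ltPrec p (Φ Ω' (M k)) ε) with hQ
  have key : Q (E Q) = true := by
    apply hE
    · obtain ⟨q, hq⟩ := hΦ p
      obtain ⟨q', hq'⟩ := hM q
      refine ⟨q', fun k k' hkk => ?_⟩
      have := hq Ω' (M k) (M k') (hq' k k' hkk)
      simp only [hQ, decide_eq_decide]
      exact ltPrec_congr this
    · exact ⟨k₀, decide_eq_true hlt⟩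
  exact of_decide_eq_true key
end
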